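/- Let A be a reversible JW-algebra with faithful normal state ρ, and let {D_m} ⊂ A⁺ with ∑_{m=1}^∞ ρ(D_m) < ∞. Then for each ε > 0 the bundle P_{(D_m)} contains a projection p with ρ(p^⊥) < 2ε. In particular every bundle is nonempty. -/

import Mathlib

open Filter Finset
open scoped ComplexOrder Topology

namespace JW

variable {H : Type*} [NormedAddCommGroup H] [InnerProductSpace ℂ H] [CompleteSpace H]

/-- Orthogonal projection predicate. -/
def IsProjection (p : H →L[ℂ] H) : Prop := IsIdempotentElem p ∧ IsSelfAdjoint p

/-- Loewner order: `a ≤ b` iff `b - a` is a positive operator. -/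
def OpLE (a b : H →L[ℂ] H) : Prop := (b - a).IsPositive

/-- The Jordan product `a ∘ b = (ab + ba)/2`. -/
noncomputable def jord (a b : H →L[ℂ] H) : H →L[ℂ] H := (2⁻¹ : ℝ) • (a * b + b * a)

/-- A real W*-algebra: a weakly closed real *-subalgebra `R ⊆ B(H)` with
`R ∩ iR = {0}` and `1 ∈ R`. -/
structure IsRealVNA (R : Set (H →L[ℂ] H)) : Prop where
  zero_mem : (0 : H →L[ℂ] H) ∈ R
  one_mem : (1 : H →L[ℂ] H) ∈ R
  add_mem : ∀ {a b : H →L[ℂ] H}, a ∈ R → b ∈ R → a + b ∈ R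
  smul_mem : ∀ (r : ℝ) {a : H →L[ℂ] H}, a ∈ R → r • a ∈ R
  mul_mem : ∀ {a b : H →L[ℂ] H}, a ∈ R → b ∈ R → a * b ∈ R
  star_mem : ∀ {a : H →L[ℂ] H}, a ∈ R → star a ∈ R
  inter_trivial : ∀ {a : H →L[ℂ] H}, a ∈ R → Complex.I • a ∈ R → a = 0
  wclosed : IsClosed ((ContinuousLinearMapWOT.ofCLM : (H →L[ℂ] H) → (H →WOT[ℂ] H)) '' R)

/-- The self-adjoint part of a set of operators; for a real W*-algebra `R`,
`saPart R` is the associated reversible JW-algebra. -/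
def saPart (R : Set (H →L[ℂ] H)) : Set (H →L[ℂ] H) := {a | a ∈ R ∧ IsSelfAdjoint a}

/-- A faithful normal state on (the self-adjoint part of) an operator algebra `A`,
given as a real-linear functional. Normality is expressed by sequential order
continuity with respect to strong convergence of increasing sequences. -/
structure IsFNState (A : Set (H →L[ℂ] H)) (ρ : (H →L[ℂ] H) →ₗ[ℝ] ℝ) : Prop where
  pos : ∀ a : H →L[ℂ] H, a.IsPositive → 0 ≤ ρ a
  one : ρ 1 = 1
  faithful : ∀ a ∈ A, a.IsPositive → ρ a = 0 → a = 0
  normal : ∀ (x : ℕ → H →L[ℂ] H) (y : H →L[ℂ] H),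
    (∀ n, OpLE (x n) (x (n + 1))) → (∀ n, OpLE (x n) y) →
    (∀ ξ : H, Tendsto (fun n => x n ξ) atTop (𝓝 (y ξ))) →
    Tendsto (fun n => ρ (x n)) atTop (𝓝 (ρ y))

/-- Membership in the bundle determined by a sequence `D` of positive elements of `A`:
nonzero projections `p ∈ A` with `sup_m ‖p(∑_{k≤m} D_k)p‖ < ∞` and `‖p D_m p‖ → 0`. -/
def InBundle (A : Set (H →L[ℂ] H)) (D : ℕ → H →L[ℂ] H) (p : H →L[ℂ] H) : Prop :=
  p ∈ A ∧ IsProjection p ∧ p ≠ 0 ∧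
  (∃ C : ℝ, ∀ m : ℕ, ‖p * (∑ k ∈ Finset.range m, D k) * p‖ ≤ C) ∧
  Tendsto (fun m => ‖p * D m * p‖) atTop (𝓝 0)

/-- Bundle convergence `x_n → l` in the JW-algebra `A` with state `ρ`. -/
def BundleConv (A : Set (H →L[ℂ] H)) (ρ : (H →L[ℂ] H) →ₗ[ℝ] ℝ)
    (x : ℕ → H →L[ℂ] H) (l : H →L[ℂ] H) : Prop :=
  ∃ D : ℕ → H →L[ℂ] H, (∀ m, D m ∈ A ∧ (D m).IsPositive) ∧
    Summable (fun m => ρ (D m)) ∧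
    ∀ p, InBundle A D p → Tendsto (fun n => ‖p * (x n - l) ^ 2 * p‖) atTop (𝓝 0)

/-- Almost uniform convergence in the JW-algebra `A` with state `ρ`. -/
def AUConv (A : Set (H →L[ℂ] H)) (ρ : (H →L[ℂ] H) →ₗ[ℝ] ℝ)
    (x : ℕ → H →L[ℂ] H) (l : H →L[ℂ] H) : Prop :=
  ∀ ε > (0 : ℝ), ∃ p : H →L[ℂ] H, p ∈ A ∧ IsProjection p ∧ ρ (1 - p) < ε ∧
    Tendsto (fun n => ‖p * (x n - l) ^ 2 * p‖) atTop (𝓝 0)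

/-- The enveloping (complex) algebra `W(R) = R + iR` of a real W*-algebra `R`. -/
def envAlg (R : Set (H →L[ℂ] H)) : Set (H →L[ℂ] H) :=
  {w | ∃ u ∈ R, ∃ v ∈ R, w = u + Complex.I • v}

/-- Bundle convergence in a von Neumann algebra `W` with (the restriction to the reals of)
a state `ρ₁`: there is a sequence `D` of positives in `W` with `∑ ρ₁(D_m) < ∞` such that
`‖(x_n - l)p‖ → 0` for every projection in the corresponding bundle. -/
def BundleConvW (W : Set (H →L[ℂ] H)) (ρ₁ : (H →L[ℂ] H) →ₗ[ℂ] ℂ)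
    (x : ℕ → H →L[ℂ] H) (l : H →L[ℂ] H) : Prop :=
  ∃ D : ℕ → H →L[ℂ] H, (∀ m, D m ∈ W ∧ (D m).IsPositive) ∧
    Summable (fun m => (ρ₁ (D m)).re) ∧
    ∀ p, InBundle W D p → Tendsto (fun n => ‖(x n - l) * p‖) atTop (𝓝 0)


end JW

/-!
Choose weights `u k → ∞` with `∑ u k ρ(D k) = C < ∞` and put `Z m = ∑_{k<m} u k D k`. For small
`t > 0` the resolvents `(1 + t Z m)⁻¹` decrease strongly to some `b ∈ R`, and normality of `ρ`
gives `ρ(1 - b) ≤ t C`. The spectral projection `e` of `b` for `[2/3, 1]` lies in `R` (it is the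
strong limit of `g(b)^n` for a continuous `g`), satisfies `e ≤ 2 b` and `1 - e ≤ 3 (1 - b)`, so
`ρ(1 - e) ≤ 3 t C`. From `e / 2 ≤ b ≤ (1 + t Z m)⁻¹` one gets `e (1 + t Z m) e ≤ 2 e`, that is
`e Z m e ≤ t⁻¹ e` for all `m`: this bounds `e (∑_{k<m} D k) e` by `t⁻¹` and `e D m e` by
`(t u m)⁻¹ → 0`.
-/

open scoped InnerProductSpace

namespace IsStarProjection

open CFC

variable {A : Type*} [CStarAlgebra A] [PartialOrder A] [StarOrderedRing A] {p : A}

/-- With `x = p √y`, the hypothesis says `‖√c • x‖ ≤ 1`, and `p y p = x x⋆` has norm `‖x‖²`. -/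
theorem conjugate_le_of_smul_le_ringInverse (hp : IsStarProjection p) {y : A}
    (hy : IsStrictlyPositive y) {c : ℝ} (hc : 0 < c) (h : c • p ≤ Ring.inverse y) :
    p * y * p ≤ c⁻¹ • p := by
  lift y to Aˣ using hy.isUnit
  have hy0 : 0 ≤ (y : A) := hy.nonneg
  have hsqrt : sqrt (c • p) = √c • p := by
    rw [sqrt_eq_iff _ _ (smul_nonneg hc.le hp.nonneg)
      (smul_nonneg (Real.sqrt_nonneg c) hp.nonneg), smul_mul_smul, Real.mul_self_sqrt hc.le,
      hp.isIdempotentElem.eq]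
  rw [Ring.inverse_unit, le_iff_norm_sqrt_mul_sqrt_inv (smul_nonneg hc.le hp.nonneg)
    (inv_nonneg_of_nonneg y hy0), inv_inv, hsqrt, smul_mul_assoc, norm_smul,
    Real.norm_of_nonneg (Real.sqrt_nonneg c)] at h
  set x := p * sqrt (y : A)
  have hx : x * star x = p * y * p := by
    rw [star_mul, hp.isSelfAdjoint.star_eq, (sqrt_nonneg (y : A)).isSelfAdjoint.star_eq,
      ← mul_assoc, mul_assoc p, sqrt_mul_sqrt_self _ hy0]
  have hnorm : ‖p * (y : A) * p‖ ≤ c⁻¹ := by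
    rw [← hx, CStarRing.norm_self_mul_star, ← sq]
    have hsc : 0 < √c := Real.sqrt_pos.2 hc
    calc ‖x‖ ^ 2 ≤ (√c)⁻¹ ^ 2 := by
          gcongr
          rw [← mul_le_mul_iff_of_pos_left hsc, mul_inv_cancel₀ hsc.ne']
          exact h
      _ = c⁻¹ := by rw [inv_pow, Real.sq_sqrt hc.le]
  have hpyp : p * (y : A) * p ≤ algebraMap ℝ A c⁻¹ :=
    (CStarAlgebra.norm_le_iff_le_algebraMap _ (by positivity)
      (conjugate_nonneg_of_nonneg hy0 hp.nonneg)).1 hnorm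
  calc p * (y : A) * p = p * (p * y * p) * p := by
        simp only [← mul_assoc, hp.isIdempotentElem.eq]
        rw [mul_assoc _ p p, hp.isIdempotentElem.eq]
    _ ≤ p * algebraMap ℝ A c⁻¹ * p := hp.isSelfAdjoint.conjugate_le_conjugate hpyp
    _ = c⁻¹ • p := by rw [Algebra.algebraMap_eq_smul_one, mul_smul_comm, mul_one,
        smul_mul_assoc, hp.isIdempotentElem.eq]

theorem norm_conjugate_le_of_conjugate_le_smul (hp : IsStarProjection p) {x : A} (hx : 0 ≤ x)
    {K : ℝ} (hK : 0 ≤ K) (h : p * x * p ≤ K • p) : ‖p * x * p‖ ≤ K := by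
  rw [CStarAlgebra.norm_le_iff_le_algebraMap _ hK (conjugate_nonneg_of_nonneg hx hp.nonneg),
    Algebra.algebraMap_eq_smul_one]
  exact h.trans (smul_le_smul_of_nonneg_left hp.le_one hK)

theorem norm_conjugate_sum_range_le (hp : IsStarProjection p) {D : ℕ → A} (hD : ∀ k, 0 ≤ D k)
    {u : ℕ → ℝ} (hu : ∀ k, 1 ≤ u k) {K : ℝ} (hK0 : 0 ≤ K)
    (hK : ∀ m, p * (∑ k ∈ range m, u k • D k) * p ≤ K • p) (m : ℕ) :
    ‖p * (∑ k ∈ range m, D k) * p‖ ≤ K :=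
  hp.norm_conjugate_le_of_conjugate_le_smul (sum_nonneg fun k _ => hD k) hK0
    ((hp.isSelfAdjoint.conjugate_le_conjugate
      (sum_le_sum fun k _ => le_smul_of_one_le_left (hD k) (hu k))).trans (hK m))

theorem tendsto_norm_conjugate_of_conjugate_sum_range_le (hp : IsStarProjection p) {D : ℕ → A}
    (hD : ∀ k, 0 ≤ D k) {u : ℕ → ℝ} (hu0 : ∀ k, 0 < u k) (hu : Tendsto u atTop atTop) {K : ℝ}
    (hK0 : 0 ≤ K) (hK : ∀ m, p * (∑ k ∈ range m, u k • D k) * p ≤ K • p) :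
    Tendsto (fun m => ‖p * D m * p‖) atTop (𝓝 0) := by
  refine squeeze_zero (fun m => norm_nonneg _) (fun m => hp.norm_conjugate_le_of_conjugate_le_smul
    (hD m) (K := (u m)⁻¹ * K) (mul_nonneg (inv_nonneg.2 (hu0 m).le) hK0) ?_) ?_
  · have hum := inv_nonneg.2 (hu0 m).le
    calc p * D m * p = (u m)⁻¹ • (p * (u m • D m) * p) := by
          rw [mul_smul_comm, smul_mul_assoc, inv_smul_smul₀ (hu0 m).ne']
      _ ≤ (u m)⁻¹ • (p * (∑ k ∈ range (m + 1), u k • D k) * p) :=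
          smul_le_smul_of_nonneg_left (hp.isSelfAdjoint.conjugate_le_conjugate
            (single_le_sum (fun k _ => smul_nonneg (hu0 k).le (hD k)) (self_mem_range_succ m))) hum
      _ ≤ (u m)⁻¹ • (K • p) := smul_le_smul_of_nonneg_left (hK (m + 1)) hum
      _ = ((u m)⁻¹ * K) • p := smul_smul _ _ _
  · simpa using hu.inv_tendsto_atTop.mul_const K

end IsStarProjection

theorem exists_one_le_tendsto_atTop_summable_mul {E : ℕ → ℝ} (hE0 : ∀ n, 0 ≤ E n)
    (hE : Summable E) :
    ∃ u : ℕ → ℝ, (∀ n, 1 ≤ u n) ∧ Tendsto u atTop atTop ∧ Summable fun n => u n * E n := by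
  -- `s n` is the tail `∑_{i ≥ n} E i`, kept positive by adding `2⁻¹ ^ n`, and `u = 1 + s^(-1/2)`:
  -- `E n / √(s n) ≤ 2 (√(s n) - √(s (n + 1)))` telescopes.
  set s : ℕ → ℝ := fun n => ∑' i, E (i + n) + 2⁻¹ ^ n
  have hs_pos (n : ℕ) : 0 < s n := by
    have : 0 ≤ ∑' i, E (i + n) := tsum_nonneg fun i => hE0 _
    positivity
  have hs_succ (n : ℕ) : E n ≤ s n - s (n + 1) := by
    have htail := ((summable_nat_add_iff n).2 hE).tsum_eq_zero_add
    simp only [zero_add, add_right_comm _ 1 n] at htail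
    simp only [s, htail, pow_succ, ← add_assoc]
    nlinarith [pow_pos (by norm_num : (0:ℝ) < 2⁻¹) n]
  have hs_lim : Tendsto s atTop (𝓝 0) := by
    simpa [s] using (tendsto_sum_nat_add E).add
      (tendsto_pow_atTop_nhds_zero_of_lt_one (by norm_num : (0:ℝ) ≤ 2⁻¹) (by norm_num))
  set v : ℕ → ℝ := fun n => (√(s n))⁻¹
  have hv : Tendsto v atTop atTop := by
    refine Tendsto.inv_tendsto_nhdsGT_zero (tendsto_nhdsWithin_iff.2 ⟨?_, ?_⟩)
    · simpa using hs_lim.sqrt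
    · exact Eventually.of_forall fun n => Real.sqrt_pos.2 (hs_pos n)
  have hvE (n : ℕ) : v n * E n ≤ 2 * (√(s n) - √(s (n + 1))) := by
    have hsqrt_pos := Real.sqrt_pos.2 (hs_pos n)
    have hmono : √(s (n + 1)) ≤ √(s n) :=
      Real.sqrt_le_sqrt (by linarith [hs_succ n, hE0 n])
    rw [inv_mul_le_iff₀ hsqrt_pos]
    calc E n ≤ s n - s (n + 1) := hs_succ n
      _ = (√(s n) - √(s (n + 1))) * (√(s n) + √(s (n + 1))) := by
        linear_combination -Real.sq_sqrt (hs_pos n).le + Real.sq_sqrt (hs_pos (n + 1)).le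
      _ ≤ (√(s n) - √(s (n + 1))) * (2 * √(s n)) := by gcongr; linarith
      _ = √(s n) * (2 * (√(s n) - √(s (n + 1)))) := by ring
  have hsum_vE : Summable fun n => v n * E n := by
    refine summable_of_sum_range_le (c := 2 * √(s 0))
      (fun n => mul_nonneg (inv_nonneg.2 (Real.sqrt_nonneg _)) (hE0 n)) fun m => ?_
    calc ∑ n ∈ range m, v n * E n ≤ ∑ n ∈ range m, 2 * (√(s n) - √(s (n + 1))) :=
          sum_le_sum fun n _ => hvE n
      _ = 2 * (√(s 0) - √(s m)) := by rw [← mul_sum, sum_range_sub' (fun n => √(s n))]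
      _ ≤ 2 * √(s 0) := by linarith [Real.sqrt_nonneg (s m)]
  refine ⟨fun n => 1 + v n, fun n => le_add_of_nonneg_right (inv_nonneg.2 (Real.sqrt_nonneg _)),
    tendsto_atTop_add_const_left _ 1 hv, ?_⟩
  simpa only [add_mul, one_mul] using hE.add hsum_vE


namespace ContinuousLinearMap

variable {E : Type*} [NormedAddCommGroup E] [InnerProductSpace ℂ E]

theorem nonneg_of_tendsto_apply {x : ℕ → E →L[ℂ] E} {l : E →L[ℂ] E}
    (hl : ∀ ξ, Tendsto (fun n => x n ξ) atTop (𝓝 (l ξ))) (hx : ∀ᶠ n in atTop, 0 ≤ x n) :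
    0 ≤ l := by
  have hinner (ξ η : E) : Tendsto (fun n => ⟪x n ξ, η⟫_ℂ) atTop (𝓝 ⟪l ξ, η⟫_ℂ) :=
    (hl ξ).inner tendsto_const_nhds
  simp only [nonneg_iff_isPositive] at hx ⊢
  refine (isPositive_iff l).2 ⟨fun ξ η => tendsto_nhds_unique (hinner ξ η) ?_,
    fun ξ => ge_of_tendsto (hinner ξ ξ) (hx.mono fun n hn => hn.inner_nonneg_left ξ)⟩
  exact (tendsto_const_nhds.inner (hl η)).congr' (hx.mono fun n hn => (hn.isSymmetric ξ η).symm)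

variable [CompleteSpace E]

theorem ge_of_tendsto_apply {x : ℕ → E →L[ℂ] E} {l a : E →L[ℂ] E}
    (hl : ∀ ξ, Tendsto (fun n => x n ξ) atTop (𝓝 (l ξ))) (hx : ∀ᶠ n in atTop, a ≤ x n) :
    a ≤ l :=
  sub_nonneg.1 <| nonneg_of_tendsto_apply (fun ξ => (hl ξ).sub_const (a ξ))
    (hx.mono fun _ => sub_nonneg.2)

theorem le_of_tendsto_apply {x : ℕ → E →L[ℂ] E} {l a : E →L[ℂ] E}
    (hl : ∀ ξ, Tendsto (fun n => x n ξ) atTop (𝓝 (l ξ))) (hx : ∀ᶠ n in atTop, x n ≤ a) :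
    l ≤ a :=
  sub_nonneg.1 <| nonneg_of_tendsto_apply (fun ξ => (hl ξ).const_sub (a ξ))
    (hx.mono fun _ => sub_nonneg.2)

theorem norm_apply_sq_le_of_nonneg {a : E →L[ℂ] E} (ha : 0 ≤ a) (ξ : E) :
    ‖a ξ‖ ^ 2 ≤ ‖a‖ * RCLike.re ⟪a ξ, ξ⟫_ℂ := by
  set s := CFC.sqrt a
  have hs : IsSelfAdjoint s := (CFC.sqrt_nonneg a).isSelfAdjoint
  have hss : s * s = a := CFC.sqrt_mul_sqrt_self a ha
  have hsξ : ‖s ξ‖ ^ 2 = RCLike.re ⟪a ξ, ξ⟫_ℂ := by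
    rw [apply_norm_sq_eq_inner_adjoint_left, ← star_eq_adjoint, hs.star_eq, ← hss]; rfl
  calc ‖a ξ‖ ^ 2 = ‖s (s ξ)‖ ^ 2 := by rw [← hss]; rfl
    _ ≤ (‖s‖ * ‖s ξ‖) ^ 2 := by gcongr; exact s.le_opNorm _
    _ = ‖a‖ * RCLike.re ⟪a ξ, ξ⟫_ℂ := by
      rw [mul_pow, hsξ, CFC.norm_sqrt a ha, Real.sq_sqrt (norm_nonneg a)]

theorem cauchySeq_apply_of_antitone {x : ℕ → E →L[ℂ] E} (hx0 : ∀ n, 0 ≤ x n) (hx : Antitone x)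
    (ξ : E) : CauchySeq fun n => x n ξ := by
  set q : ℕ → ℝ := fun n => RCLike.re ⟪x n ξ, ξ⟫_ℂ
  have hq_sub (m n : ℕ) : RCLike.re ⟪(x m - x n) ξ, ξ⟫_ℂ = q m - q n := by
    simp [q]
  have hq_nonneg {m n : ℕ} (hmn : m ≤ n) : 0 ≤ q m - q n := by
    rw [← hq_sub]
    exact ((nonneg_iff_isPositive _).1 (sub_nonneg.2 (hx hmn))).re_inner_nonneg_left ξ
  have hq : Antitone q := fun m n hmn => sub_nonneg.1 (hq_nonneg hmn)
  obtain ⟨L, hL⟩ : ∃ L, Tendsto q atTop (𝓝 L) :=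
    ⟨_, tendsto_atTop_ciInf hq ⟨0, Set.forall_mem_range.2 fun n =>
      ((nonneg_iff_isPositive _).1 (hx0 n)).re_inner_nonneg_left ξ⟩⟩
  refine cauchySeq_of_le_tendsto_0' (fun n => √(‖x 0‖ * (q n - L))) (fun m n hmn => ?_) ?_
  · rw [dist_eq_norm, ← sub_apply]
    refine Real.le_sqrt_of_sq_le ((norm_apply_sq_le_of_nonneg (sub_nonneg.2 (hx hmn)) ξ).trans ?_)
    rw [hq_sub]
    have hnorm : ‖x m - x n‖ ≤ ‖x 0‖ :=
      (CStarAlgebra.norm_le_norm_of_nonneg_of_le (sub_nonneg.2 (hx hmn))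
        (sub_le_self _ (hx0 n))).trans
      (CStarAlgebra.norm_le_norm_of_nonneg_of_le (hx0 m) (hx (Nat.zero_le m)))
    exact mul_le_mul hnorm (by linarith [hq.le_of_tendsto hL n]) (hq_nonneg hmn) (norm_nonneg _)
  · simpa using ((hL.sub_const L).const_mul ‖x 0‖).sqrt

theorem exists_tendsto_apply_of_antitone {x : ℕ → E →L[ℂ] E} (hx0 : ∀ n, 0 ≤ x n)
    (hx : Antitone x) : ∃ l : E →L[ℂ] E, ∀ ξ, Tendsto (fun n => x n ξ) atTop (𝓝 (l ξ)) := by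
  choose f hf using fun ξ => cauchySeq_tendsto_of_complete (cauchySeq_apply_of_antitone hx0 hx ξ)
  exact ⟨continuousLinearMapOfTendsto x (tendsto_pi_nhds.2 hf), hf⟩

theorem exists_isStarProjection_tendsto_pow_apply {G : E →L[ℂ] E} (hG0 : 0 ≤ G) (hG1 : G ≤ 1) :
    ∃ e : E →L[ℂ] E, IsStarProjection e ∧ ∀ ξ, Tendsto (fun n => (G ^ n) ξ) atTop (𝓝 (e ξ)) := by
  obtain ⟨e, he⟩ := exists_tendsto_apply_of_antitone (CStarAlgebra.pow_nonneg hG0)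
    (CStarAlgebra.pow_antitone hG0 hG1)
  have hGe : G * e = e := ext fun ξ => tendsto_nhds_unique ((G.continuous.tendsto _).comp (he ξ))
    (((he ξ).comp (tendsto_add_atTop_nat 1)).congr fun n => by
      rw [Function.comp_apply, Function.comp_apply, pow_succ']; rfl)
  have hpow_e (n : ℕ) : G ^ n * e = e := by
    induction n with
    | zero => exact one_mul e
    | succ n ih => rw [pow_succ, mul_assoc, hGe, ih]
  have hee : e * e = e := ext fun ξ => tendsto_nhds_unique (he (e ξ))
    (tendsto_const_nhds.congr fun n => (congrArg (· ξ) (hpow_e n)).symm)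
  have he0 : 0 ≤ e := ge_of_tendsto_apply he (Eventually.of_forall (CStarAlgebra.pow_nonneg hG0))
  exact ⟨e, ⟨hee, he0.isSelfAdjoint⟩, he⟩

end ContinuousLinearMap

namespace JW

variable {H : Type*} [NormedAddCommGroup H] [InnerProductSpace ℂ H]

theorem IsFNState.mono {A : Set (H →L[ℂ] H)} {ρ : (H →L[ℂ] H) →ₗ[ℝ] ℝ} (hρ : IsFNState A ρ)
    {a b : H →L[ℂ] H} (hab : a ≤ b) : ρ a ≤ ρ b := by
  simpa using hρ.pos (b - a) ((ContinuousLinearMap.le_def a b).1 hab)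

variable [CompleteSpace H]

theorem IsFNState.map_le_of_monotone_of_tendsto_apply {A : Set (H →L[ℂ] H)}
    {ρ : (H →L[ℂ] H) →ₗ[ℝ] ℝ} (hρ : IsFNState A ρ) {x : ℕ → H →L[ℂ] H}
    (hx : Monotone x) {y : H →L[ℂ] H} (hy : ∀ ξ, Tendsto (fun n => x n ξ) atTop (𝓝 (y ξ)))
    {c : ℝ} (hc : ∀ n, ρ (x n) ≤ c) : ρ y ≤ c :=
  le_of_tendsto (hρ.normal x y (fun n => (ContinuousLinearMap.le_def _ _).1 (hx n.le_succ))
    (fun n => (ContinuousLinearMap.le_def _ _).1 <| ContinuousLinearMap.ge_of_tendsto_apply hy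
      (eventually_atTop.2 ⟨n, fun _ => (hx ·)⟩)) hy) (Eventually.of_forall hc)

namespace IsRealVNA

variable {R : Set (H →L[ℂ] H)}

def toStarSubalgebra (hR : IsRealVNA R) : StarSubalgebra ℝ (H →L[ℂ] H) where
  carrier := R
  mul_mem' := hR.mul_mem
  one_mem' := hR.one_mem
  add_mem' := hR.add_mem
  zero_mem' := hR.zero_mem
  algebraMap_mem' r := by
    simpa [Algebra.algebraMap_eq_smul_one] using hR.smul_mem r hR.one_mem
  star_mem' := hR.star_mem

theorem isClosed (hR : IsRealVNA R) : IsClosed R := by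
  simpa [Set.preimage_image_eq _ ContinuousLinearMapWOT.ofCLM_injective] using
    hR.wclosed.preimage ContinuousLinearMapWOT.continuous_ofCLM

theorem cfc_mem (hR : IsRealVNA R) (f : ℝ → ℝ) {a : H →L[ℂ] H} (ha : a ∈ R) : cfc f a ∈ R :=
  StarAlgebra.elemental.le_of_mem (S := hR.toStarSubalgebra) hR.isClosed ha (cfc_mem_elemental f a)

theorem mem_of_tendsto_apply (hR : IsRealVNA R) {x : ℕ → H →L[ℂ] H} (hx : ∀ n, x n ∈ R)
    {a : H →L[ℂ] H} (h : ∀ ξ, Tendsto (fun n => x n ξ) atTop (𝓝 (a ξ))) : a ∈ R := by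
  have hwot : Tendsto (fun n => ContinuousLinearMapWOT.ofCLM (x n)) atTop
      (𝓝 (ContinuousLinearMapWOT.ofCLM a)) :=
    ContinuousLinearMapWOT.tendsto_iff_forall_inner_apply_tendsto.2 fun ξ η =>
      tendsto_const_nhds.inner (h ξ)
  obtain ⟨c, hc, hca⟩ :=
    hR.wclosed.mem_of_tendsto hwot (Eventually.of_forall fun n => ⟨x n, hx n, rfl⟩)
  exact ContinuousLinearMapWOT.ofCLM_injective hca ▸ hc

theorem exists_le_ringInverse_one_add (hR : IsRealVNA R) {A : Set (H →L[ℂ] H)}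
    {ρ : (H →L[ℂ] H) →ₗ[ℝ] ℝ} (hρ : IsFNState A ρ) {W : ℕ → H →L[ℂ] H} (hWR : ∀ m, W m ∈ R)
    (hW0 : ∀ m, 0 ≤ W m) (hW : Monotone W) {c : ℝ} (hc : ∀ m, ρ (W m) ≤ c) :
    ∃ b ∈ R, 0 ≤ b ∧ b ≤ 1 ∧ (∀ m, b ≤ Ring.inverse (1 + W m)) ∧ ρ (1 - b) ≤ c := by
  set r : ℕ → H →L[ℂ] H := fun m => cfc (fun s : ℝ => (1 + s)⁻¹) (W m)
  have h1s {m : ℕ} {s : ℝ} (hs : s ∈ spectrum ℝ (W m)) : 0 < 1 + s := by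
    linarith [spectrum_nonneg_of_nonneg (hW0 m) hs]
  have hcont (m : ℕ) : ContinuousOn (fun s : ℝ => (1 + s)⁻¹) (spectrum ℝ (W m)) :=
    (continuousOn_const.add continuousOn_id).inv₀ fun s hs => (h1s hs).ne'
  have hr_inv (m : ℕ) : r m = Ring.inverse (1 + W m) := by
    change cfc _ (W m) = _
    rw [cfc_inv (fun s : ℝ => 1 + s) (W m) (fun s hs => (h1s hs).ne'),
      cfc_const_add 1 (fun s => s) (W m), cfc_id' ℝ (W m), map_one]
  have hr_anti : Antitone r := fun m n hmn => by
    rw [hr_inv, hr_inv]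
    exact CStarAlgebra.ringInverse_le_ringInverse (add_le_add_right (hW hmn) 1)
      (isStrictlyPositive_one.add_nonneg (hW0 m))
  have hr0 (m : ℕ) : 0 ≤ r m := cfc_nonneg fun s hs => (inv_pos.2 (h1s hs)).le
  have hr1 (m : ℕ) : r m ≤ 1 :=
    cfc_le_one _ _ fun s hs =>
      inv_le_one_of_one_le₀ (by linarith [h1s hs, spectrum_nonneg_of_nonneg (hW0 m) hs])
  have hr_sub (m : ℕ) : 1 - r m ≤ W m := by
    calc 1 - r m = cfc (fun s : ℝ => 1 - (1 + s)⁻¹) (W m) := by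
          rw [cfc_sub (fun _ => 1) (fun s : ℝ => (1 + s)⁻¹) (W m) continuousOn_const (hcont m),
            cfc_const_one ℝ (W m)]
      _ ≤ cfc (fun s : ℝ => s) (W m) := cfc_mono (fun s hs => by
          have h : 1 - s ≤ (1 + s)⁻¹ := by
            rw [← one_div, le_div_iff₀ (h1s hs)]
            nlinarith [sq_nonneg s]
          linarith) ((continuousOn_const.sub (hcont m))) continuousOn_id
      _ = W m := cfc_id' ℝ (W m)
  obtain ⟨b, hb⟩ := ContinuousLinearMap.exists_tendsto_apply_of_antitone hr0 hr_anti
  refine ⟨b, hR.mem_of_tendsto_apply (fun m => hR.cfc_mem _ (hWR m)) hb,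
    ContinuousLinearMap.ge_of_tendsto_apply hb (Eventually.of_forall hr0),
    ContinuousLinearMap.le_of_tendsto_apply hb (Eventually.of_forall hr1),
    fun m => hr_inv m ▸ ContinuousLinearMap.le_of_tendsto_apply hb
      (eventually_atTop.2 ⟨m, fun _ => (hr_anti ·)⟩), ?_⟩
  exact hρ.map_le_of_monotone_of_tendsto_apply (y := 1 - b)
    (fun m n hmn => sub_le_sub_left (hr_anti hmn) 1)
    (fun ξ => (hb ξ).const_sub ξ) fun m => (hρ.mono (hr_sub m)).trans (hc m)

theorem exists_isStarProjection_two_inv_smul_le (hR : IsRealVNA R) {b : H →L[ℂ] H} (hbR : b ∈ R)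
    (hb0 : 0 ≤ b) (hb1 : b ≤ 1) :
    ∃ e ∈ R, IsStarProjection e ∧ (2⁻¹ : ℝ) • e ≤ b ∧ 1 - e ≤ (3 : ℝ) • (1 - b) := by
  -- `g = 0` on `(-∞, 1/2]` and `g = 1` on `[2/3, ∞)`, so `g ≤ 2 id` and `1 - g ^ n ≤ 3 (1 - id)`
  -- on `[0, 1]`; the limit of `g(b) ^ n` is the spectral projection of `b` for `[2/3, 1]`.
  set g : ℝ → ℝ := fun s => min 1 (max 0 (6 * s - 3))
  have hg : Continuous g := by fun_prop
  have hspec {s : ℝ} (hs : s ∈ spectrum ℝ b) : 0 ≤ s ∧ s ≤ 1 :=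
    ⟨spectrum_nonneg_of_nonneg hb0 hs,
      (le_algebraMap_iff_spectrum_le (r := (1 : ℝ))).1 (by simpa using hb1) s hs⟩
  have hb : IsSelfAdjoint b := hb0.isSelfAdjoint
  set G := cfc g b
  have hG0 : 0 ≤ G := cfc_nonneg fun s _ => le_min zero_le_one (le_max_left _ _)
  have hG1 : G ≤ 1 := cfc_le_one _ _ fun s _ => min_le_left _ _
  obtain ⟨e, he, hGe⟩ := ContinuousLinearMap.exists_isStarProjection_tendsto_pow_apply hG0 hG1
  refine ⟨e, hR.mem_of_tendsto_apply (fun n => hR.toStarSubalgebra.pow_mem (hR.cfc_mem g hbR) n)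
    hGe, he, ?_, ?_⟩
  · have hGb : G ≤ (2 : ℝ) • b := by
      calc G ≤ cfc (fun s : ℝ => 2 * s) b := cfc_mono (fun s hs => by
            rcases le_or_gt s 2⁻¹ with h | h
            · rw [show g s = 0 by
                simp only [g]; rw [max_eq_left (by linarith), min_eq_right zero_le_one]]
              linarith [(hspec hs).1]
            · linarith [min_le_left 1 (max 0 (6 * s - 3))]) hg.continuousOn
        _ = (2 : ℝ) • b := by rw [cfc_const_mul 2 (fun s => s) b continuousOn_id, cfc_id' ℝ b hb]
    have heG : e ≤ G := ContinuousLinearMap.le_of_tendsto_apply hGe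
      (eventually_atTop.2 ⟨1, fun n hn => by simpa using CStarAlgebra.pow_antitone hG0 hG1 hn⟩)
    calc (2⁻¹ : ℝ) • e ≤ (2⁻¹ : ℝ) • ((2 : ℝ) • b) :=
          smul_le_smul_of_nonneg_left (heG.trans hGb) (by norm_num)
      _ = b := by rw [smul_smul]; norm_num
  · refine ContinuousLinearMap.le_of_tendsto_apply (x := fun n => 1 - G ^ n)
      (fun ξ => (hGe ξ).const_sub ξ) (Eventually.of_forall fun n => ?_)
    calc 1 - G ^ n = cfc (fun s => 1 - g s ^ n) b := by
          rw [cfc_sub (fun _ => 1) (fun s => g s ^ n) b continuousOn_const (hg.pow n).continuousOn,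
            cfc_const_one ℝ b hb, cfc_pow g n b hg.continuousOn hb]
      _ ≤ cfc (fun s => 3 * (1 - s)) b := cfc_mono (fun s hs => by
          have hgn : 0 ≤ g s ^ n := pow_nonneg (le_min zero_le_one (le_max_left _ _)) n
          rcases le_or_gt (2 / 3) s with h | h
          · rw [show g s = 1 by
              simp only [g]; rw [max_eq_right (by linarith), min_eq_left (by linarith)]]
            linarith [(hspec hs).2, one_pow (M := ℝ) n]
          · linarith) (continuousOn_const.sub (hg.pow n).continuousOn)
      _ = (3 : ℝ) • (1 - b) := by
          rw [cfc_const_mul 3 (fun s => 1 - s) b (continuousOn_const.sub continuousOn_id),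
            cfc_sub (fun _ => 1) (fun s => s) b continuousOn_const continuousOn_id,
            cfc_const_one ℝ b hb, cfc_id' ℝ b hb]

theorem exists_isStarProjection_conjugate_le (hR : IsRealVNA R) {A : Set (H →L[ℂ] H)}
    {ρ : (H →L[ℂ] H) →ₗ[ℝ] ℝ} (hρ : IsFNState A ρ) {W : ℕ → H →L[ℂ] H} (hWR : ∀ m, W m ∈ R)
    (hW0 : ∀ m, 0 ≤ W m) (hW : Monotone W) {c : ℝ} (hc : ∀ m, ρ (W m) ≤ c) :
    ∃ e ∈ R, IsStarProjection e ∧ ρ (1 - e) ≤ 3 * c ∧ ∀ m, e * W m * e ≤ e := by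
  obtain ⟨b, hbR, hb0, hb1, hbW, hρb⟩ := hR.exists_le_ringInverse_one_add hρ hWR hW0 hW hc
  obtain ⟨e, heR, he, heb, he1⟩ := hR.exists_isStarProjection_two_inv_smul_le hbR hb0 hb1
  refine ⟨e, heR, he, ?_, fun m => ?_⟩
  · calc ρ (1 - e) ≤ ρ ((3 : ℝ) • (1 - b)) := hρ.mono he1
      _ ≤ 3 * c := by rw [map_smul, smul_eq_mul]; linarith
  · have h := he.conjugate_le_of_smul_le_ringInverse (isStrictlyPositive_one.add_nonneg (hW0 m))
      (by norm_num) (heb.trans (hbW m))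
    rw [mul_add, add_mul, mul_one, he.isIdempotentElem.eq, inv_inv, two_smul] at h
    exact le_of_add_le_add_left h

end IsRealVNA

theorem exists_inBundle_map_one_sub_lt {R : Set (H →L[ℂ] H)} (hR : IsRealVNA R)
    {ρ : (H →L[ℂ] H) →ₗ[ℝ] ℝ} (hρ : IsFNState (saPart R) ρ) {D : ℕ → H →L[ℂ] H}
    (hD : ∀ m, D m ∈ saPart R ∧ (D m).IsPositive) (hsum : Summable fun m => ρ (D m))
    {ε : ℝ} (hε : 0 < ε) : ∃ p, InBundle (saPart R) D p ∧ ρ (1 - p) < ε := by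
  have hD0 (k : ℕ) : 0 ≤ D k := (ContinuousLinearMap.nonneg_iff_isPositive _).2 (hD k).2
  obtain ⟨u, hu1, hu, hsum_u⟩ :=
    exists_one_le_tendsto_atTop_summable_mul (fun k => hρ.pos _ (hD k).2) hsum
  have hu0 (k : ℕ) : 0 < u k := zero_lt_one.trans_le (hu1 k)
  set C := ∑' k, u k * ρ (D k)
  have hC : 0 ≤ C := tsum_nonneg fun k => mul_nonneg (hu0 k).le (hρ.pos _ (hD k).2)
  set Z : ℕ → H →L[ℂ] H := fun m => ∑ k ∈ range m, u k • D k
  have hZ : Monotone Z := monotone_nat_of_le_succ fun m => by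
    simpa [Z, sum_range_succ] using smul_nonneg (hu0 m).le (hD0 m)
  have hρZ (m : ℕ) : ρ (Z m) ≤ C := by
    simpa [Z, map_sum] using hsum_u.sum_le_tsum (range m) fun k _ =>
      mul_nonneg (hu0 k).le (hρ.pos _ (hD k).2)
  set t := min ε 1 / (3 * C + 1)
  have ht : 0 < t := by positivity
  obtain ⟨e, heR, he, hρe, heZe⟩ :=
    hR.exists_isStarProjection_conjugate_le hρ (W := fun m => t • Z m)
    (fun m => hR.toStarSubalgebra.smul_mem (sum_mem fun k _ => hR.smul_mem (u k) (hD k).1.1) t)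
    (fun m => smul_nonneg ht.le (sum_nonneg fun k _ => smul_nonneg (hu0 k).le (hD0 k)))
    (fun m n hmn => smul_le_smul_of_nonneg_left (hZ hmn) ht.le) (c := t * C)
    fun m => by rw [map_smul, smul_eq_mul]; exact mul_le_mul_of_nonneg_left (hρZ m) ht.le
  have hρe_lt : ρ (1 - e) < min ε 1 := by
    have hm : 0 < min ε 1 := lt_min hε one_pos
    calc ρ (1 - e) ≤ 3 * (t * C) := hρe
      _ = min ε 1 * (3 * C / (3 * C + 1)) := by ring
      _ < min ε 1 * 1 := mul_lt_mul_of_pos_left ((div_lt_one (by positivity)).2 (by linarith)) hm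
      _ = min ε 1 := mul_one _
  have heZ (m : ℕ) : e * Z m * e ≤ t⁻¹ • e := by
    calc e * Z m * e = t⁻¹ • (e * (t • Z m) * e) := by
          rw [mul_smul_comm, smul_mul_assoc, inv_smul_smul₀ ht.ne']
      _ ≤ t⁻¹ • e := smul_le_smul_of_nonneg_left (heZe m) (inv_nonneg.2 ht.le)
  refine ⟨e, ⟨⟨heR, he.isSelfAdjoint⟩, ⟨he.isIdempotentElem, he.isSelfAdjoint⟩, ?_,
    ⟨t⁻¹, he.norm_conjugate_sum_range_le hD0 hu1 (inv_nonneg.2 ht.le) heZ⟩,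
    he.tendsto_norm_conjugate_of_conjugate_sum_range_le hD0 hu0 hu (inv_nonneg.2 ht.le) heZ⟩,
    hρe_lt.trans_le (min_le_left _ _)⟩
  rintro rfl
  simp only [sub_zero, hρ.one] at hρe_lt
  linarith [min_le_right ε 1]

/-- every bundle in a reversible JW-algebra contains projections `p`
with `ρ(p^⊥) < 2ε` for each `ε > 0`; in particular every bundle is nonempty. -/
theorem statement6 (R : Set (H →L[ℂ] H)) (hR : IsRealVNA R)
    (ρ : (H →L[ℂ] H) →ₗ[ℝ] ℝ) (hρ : IsFNState (saPart R) ρ)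
    (D : ℕ → H →L[ℂ] H) (hD : ∀ m, D m ∈ saPart R ∧ (D m).IsPositive)
    (hsum : Summable fun m => ρ (D m)) :
    (∀ ε > (0 : ℝ), ∃ p : H →L[ℂ] H, InBundle (saPart R) D p ∧ ρ (1 - p) < 2 * ε) ∧
    ∃ p : H →L[ℂ] H, InBundle (saPart R) D p := by
  refine ⟨fun ε hε => ?_, ?_⟩
  · obtain ⟨p, hp, hρp⟩ := exists_inBundle_map_one_sub_lt hR hρ hD hsum hε
    exact ⟨p, hp, hρp.trans (by linarith)⟩
  · obtain ⟨p, hp, -⟩ := exists_inBundle_map_one_sub_lt hR hρ hD hsum one_pos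
    exact ⟨p, hp⟩
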